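/- arXiv:2209.09698 — 3 statements merged into one kernel-verified Lean document; each statement's English description precedes it below -/
import Mathlib

section
/- Let ρⁿ, ρⁿ⁺¹ be smooth scalar functions and uⁿ a smooth vector field on a bounded domain Ω with uⁿ = 0 on ∂Ω and ρⁿ, ρⁿ⁺¹ in L². Suppose (ρⁿ⁺¹ - ρⁿ)/τ + div(ρⁿ⁺¹uⁿ) - (ρⁿ⁺¹/2)·div(uⁿ) = 0 on Ω for some τ > 0. Then ‖ρⁿ⁺¹‖² - ‖ρⁿ‖² + ‖ρⁿ⁺¹ - ρⁿ‖² = 0, where ‖·‖ is the L²(Ω) norm. In particular ‖ρⁿ⁺¹‖ ≤ ‖ρⁿ‖. -/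
open MeasureTheory Metric Set Function Filter Topology

/-- Divergence of a vector field on `ℝ^d`. -/
noncomputable def diverg {d : ℕ} (u : EuclideanSpace ℝ (Fin d) → EuclideanSpace ℝ (Fin d))
    (x : EuclideanSpace ℝ (Fin d)) : ℝ :=
  ∑ i, fderiv ℝ u x (EuclideanSpace.single i 1) i

lemma euclid_decomp {d : ℕ} (v : EuclideanSpace ℝ (Fin d)) :
    ∑ i, v i • EuclideanSpace.single i (1:ℝ) = v := by
  ext j
  rw [WithLp.ofLp_sum, Finset.sum_apply]
  simp [EuclideanSpace.single_apply]

lemma diverg_smul {d : ℕ} (c : EuclideanSpace ℝ (Fin d) → ℝ)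
    (u : EuclideanSpace ℝ (Fin d) → EuclideanSpace ℝ (Fin d)) (x : EuclideanSpace ℝ (Fin d))
    (hc : DifferentiableAt ℝ c x) (hu : DifferentiableAt ℝ u x) :
    diverg (fun y => c y • u y) x = c x * diverg u x + fderiv ℝ c x (u x) := by
  unfold diverg
  rw [fderiv_fun_smul hc hu]
  have : ∀ i : Fin d, (c x • (fderiv ℝ u x) (EuclideanSpace.single i 1)
        + (fderiv ℝ c x) (EuclideanSpace.single i 1) • u x) i
      = c x * (fderiv ℝ u x) (EuclideanSpace.single i 1) i
        + (u x) i • (fderiv ℝ c x) (EuclideanSpace.single i (1:ℝ)) := by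
    intro i
    rw [PiLp.add_apply, PiLp.smul_apply, PiLp.smul_apply]
    simp [smul_eq_mul]; ring
  simp only [ContinuousLinearMap.add_apply, ContinuousLinearMap.coe_smul',
    Pi.smul_apply, ContinuousLinearMap.smulRight_apply]
  rw [Finset.sum_congr rfl (fun i _ => this i), Finset.sum_add_distrib, Finset.mul_sum]
  congr 1
  calc ∑ i, (u x) i • (fderiv ℝ c x) (EuclideanSpace.single i (1:ℝ))
      = (fderiv ℝ c x) (∑ i, (u x) i • EuclideanSpace.single i (1:ℝ)) := by
        rw [map_sum]
        exact Finset.sum_congr rfl fun i _ => (map_smul _ _ _).symm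
    _ = fderiv ℝ c x (u x) := by rw [euclid_decomp]

lemma continuous_diverg {d : ℕ} {u : EuclideanSpace ℝ (Fin d) → EuclideanSpace ℝ (Fin d)}
    (hu : ContDiff ℝ (⊤ : ℕ∞) u) : Continuous (diverg u) := by
  unfold diverg
  apply continuous_finset_sum
  intro i _
  have h1 : Continuous (fderiv ℝ u) := hu.continuous_fderiv (by simp : ((⊤:ℕ∞) : WithTop ℕ∞) ≠ 0)
  exact (EuclideanSpace.proj i).continuous.comp
    ((ContinuousLinearMap.apply ℝ _ (EuclideanSpace.single i (1:ℝ))).continuous.comp h1)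


lemma pi_div_int_zero {n : ℕ} (g : (Fin (n+1) → ℝ) → (Fin (n+1) → ℝ))
    (hg : ContDiff ℝ (⊤ : ℕ∞) g) (hsupp : HasCompactSupport g) :
    ∫ x, ∑ i, fderiv ℝ g x (Pi.single i 1) i = 0 := by
  obtain ⟨R, hR0, hRsub⟩ : ∃ R, 0 < R ∧ tsupport g ⊆ Metric.ball 0 R := by
    obtain ⟨R, hR⟩ := hsupp.isBounded.subset_ball 0
    exact ⟨max R 1, lt_of_lt_of_le one_pos (le_max_right _ _),
      hR.trans (Metric.ball_subset_ball (le_max_left _ _))⟩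
  set a : Fin (n+1) → ℝ := fun _ => -R with ha
  set b : Fin (n+1) → ℝ := fun _ => R with hb
  have hle : a ≤ b := fun i => by simp [ha, hb]; linarith
  have hball : Metric.ball (0 : Fin (n+1) → ℝ) R ⊆ Icc a b := by
    intro x hx
    rw [mem_ball_zero_iff] at hx
    constructor <;> intro i <;>
      have := (pi_norm_lt_iff hR0).mp hx i <;> rw [Real.norm_eq_abs, abs_lt] at this
    · exact le_of_lt this.1
    · exact le_of_lt this.2
  have hdiff : ∀ x, HasFDerivAt g (fderiv ℝ g x) x := fun x =>
    (hg.differentiable (by simp : ((⊤:ℕ∞) : WithTop ℕ∞) ≠ 0) x).hasFDerivAt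
  have hDcont : Continuous fun x => ∑ i, fderiv ℝ g x (Pi.single i 1) i := by
    apply continuous_finset_sum
    intro i _
    have h2 : Continuous fun a => (fderiv ℝ g a) (Pi.single i (1:ℝ)) :=
      (hg.continuous_fderiv (by simp : ((⊤:ℕ∞) : WithTop ℕ∞) ≠ 0)).clm_apply continuous_const
    exact (continuous_apply i).comp h2
  have hD0 : ∀ x ∉ Icc a b, (∑ i, fderiv ℝ g x (Pi.single i 1) i) = 0 := by
    intro x hx
    have hx' : x ∉ tsupport g := fun h => hx (hball (hRsub h))
    have h0 : fderiv ℝ g x = 0 := by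
      have h1 : g =ᶠ[nhds x] (fun _ => (0 : Fin (n+1) → ℝ)) :=
        notMem_tsupport_iff_eventuallyEq.mp hx'
      rw [Filter.EventuallyEq.fderiv_eq h1, fderiv_fun_const]; rfl
    simp [h0]
  have key := MeasureTheory.integral_divergence_of_hasFDerivAt_off_countable a b hle g
    (fderiv ℝ g) ∅ countable_empty hg.continuous.continuousOn
    (fun x _ => hdiff x) (ContinuousOn.integrableOn_compact isCompact_Icc hDcont.continuousOn)
  have hface : ∀ (i : Fin (n+1)) (c : ℝ), |c| = R →
      ∀ y : Fin n → ℝ, g (@Fin.insertNth n (fun _ => ℝ) i c y) = 0 := by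
    intro i c hc y
    apply image_eq_zero_of_notMem_tsupport
    intro hmem
    have h1 := mem_ball_zero_iff.mp (hRsub hmem)
    have h2 : |c| ≤ ‖@Fin.insertNth n (fun _ => ℝ) i c y‖ := by
      have := norm_le_pi_norm (@Fin.insertNth n (fun _ => ℝ) i c y) i
      simpa [Fin.insertNth_apply_same] using this
    rw [hc] at h2; linarith
  rw [← MeasureTheory.setIntegral_eq_integral_of_forall_compl_eq_zero hD0, key]
  have : ∀ i : Fin (n+1),
      ((∫ x in Icc (a ∘ i.succAbove) (b ∘ i.succAbove), g (i.insertNth (b i) x) i) -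
        ∫ x in Icc (a ∘ i.succAbove) (b ∘ i.succAbove), g (i.insertNth (a i) x) i) = 0 := by
    intro i
    have h1 : ∀ x : Fin n → ℝ, g (i.insertNth (b i) x) i = 0 := fun x => by
      rw [hface i (b i) (by simp [hb, abs_of_pos hR0]) x]; rfl
    have h2 : ∀ x : Fin n → ℝ, g (i.insertNth (a i) x) i = 0 := fun x => by
      rw [hface i (a i) (by simp [ha, abs_of_pos hR0]) x]; rfl
    simp [h1, h2]
  rw [Finset.sum_congr rfl fun i _ => this i]
  simp


lemma euclid_div_int_zero {d : ℕ} (G : EuclideanSpace ℝ (Fin d) → EuclideanSpace ℝ (Fin d))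
    (hG : ContDiff ℝ (⊤ : ℕ∞) G) (hsupp : HasCompactSupport G) :
    ∫ x, diverg G x = 0 := by
  match d with
  | 0 =>
    have : ∀ x, diverg G x = 0 := fun x => by simp [diverg]
    simp [this]
  | n + 1 =>
    set eL := EuclideanSpace.equiv (Fin (n+1)) ℝ with heL
    set g : (Fin (n+1) → ℝ) → (Fin (n+1) → ℝ) := fun x => eL (G (eL.symm x)) with hgdef
    have hgc : ContDiff ℝ (⊤ : ℕ∞) g := by
      apply (eL.contDiff).comp (hG.comp eL.symm.contDiff)
    have hgs : HasCompactSupport g := by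
      have h1 : HasCompactSupport (⇑eL ∘ G) := hsupp.comp_left (by simp)
      have : g = (⇑eL ∘ G) ∘ ⇑(eL.symm.toHomeomorph) := rfl
      rw [this]
      exact h1.comp_homeomorph _
    have hdivg : ∀ x, (∑ i, fderiv ℝ g x (Pi.single i 1) i) = diverg G (eL.symm x) := by
      intro x
      have h1 : g = ⇑eL ∘ (G ∘ ⇑eL.symm) := rfl
      have h2 : fderiv ℝ g x = (eL : EuclideanSpace ℝ (Fin (n+1)) →L[ℝ] (Fin (n+1) → ℝ)).comp
          (fderiv ℝ (G ∘ ⇑eL.symm) x) := by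
        rw [h1, eL.comp_fderiv]
      have h3 : fderiv ℝ (G ∘ ⇑eL.symm) x = (fderiv ℝ G (eL.symm x)).comp
          (eL.symm : (Fin (n+1) → ℝ) →L[ℝ] EuclideanSpace ℝ (Fin (n+1))) := by
        rw [eL.symm.comp_right_fderiv]
      rw [h2, h3]
      unfold diverg
      apply Finset.sum_congr rfl
      intro i _
      congr 1
    rw [show (fun x => diverg G x) = fun x => diverg G x from rfl]
    have hmp := (EuclideanSpace.volume_preserving_symm_measurableEquiv_toLp (Fin (n+1))).symm
    have hint : ∫ x : Fin (n+1) → ℝ, diverg G ((MeasurableEquiv.toLp 2 (Fin (n+1) → ℝ)) x)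
        = ∫ y : EuclideanSpace ℝ (Fin (n+1)), diverg G y :=
      hmp.integral_comp (MeasurableEquiv.measurableEmbedding _) _
    have hco : ∀ x : Fin (n+1) → ℝ,
        diverg G ((MeasurableEquiv.toLp 2 (Fin (n+1) → ℝ)) x) = diverg G (eL.symm x) := by
      intro x; rfl
    rw [← hint]
    simp_rw [hco, ← hdivg]
    exact pi_div_int_zero g hgc hgs


lemma cutoff_exists {d : ℕ} (A : Set (EuclideanSpace ℝ (Fin d))) {ε : ℝ} (hε : 0 < ε) :
    ∃ ψ : EuclideanSpace ℝ (Fin d) → ℝ, ContDiff ℝ (⊤ : ℕ∞) ψ ∧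
      (∀ x, 0 ≤ ψ x) ∧ (∀ x, ψ x ≤ 1) ∧
      (∀ x, infDist x A ≤ ε/2 → ψ x = 0) ∧
      (∀ x, 3*ε ≤ infDist x A → ψ x = 1) ∧
      (∀ x, ‖fderiv ℝ ψ x‖ ≤ ε⁻¹) ∧
      (∀ x, infDist x A < ε/2 → fderiv ℝ ψ x = 0) ∧
      (∀ x, 3*ε < infDist x A → fderiv ℝ ψ x = 0) := by
  classical
  set k : NNReal := ⟨ε⁻¹, by positivity⟩ with hk
  -- the Lipschitz clamp
  set c : ℝ → ℝ := fun r => max 0 (min (r/ε - 1) 1) with hc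
  have hc0 : ∀ r, r ≤ ε → c r = 0 := by
    intro r hr
    have h1 : r/ε - 1 ≤ 0 := by
      rw [sub_nonpos, div_le_one hε]; exact hr
    have : min (r/ε - 1) 1 ≤ 0 := le_trans (min_le_left _ _) h1
    simp [hc, max_eq_left this]
  have hc1 : ∀ r, 2*ε ≤ r → c r = 1 := by
    intro r hr
    have h2 : (2:ℝ) ≤ r/ε := (le_div_iff₀ hε).mpr (by linarith)
    have h1 : (1:ℝ) ≤ r/ε - 1 := by linarith
    simp [hc, min_eq_right h1]
  have hcnn : ∀ r, 0 ≤ c r := fun r => le_max_left _ _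
  have hcle : ∀ r, c r ≤ 1 := fun r => by
    apply max_le (by norm_num)
    exact min_le_right _ _
  have hclip : LipschitzWith k c := by
    have l1 : LipschitzWith k (fun r : ℝ => r/ε - 1) := by
      apply LipschitzWith.of_dist_le_mul
      intro a b
      rw [Real.dist_eq, Real.dist_eq]
      have : a/ε - 1 - (b/ε - 1) = (a - b) * ε⁻¹ := by field_simp; ring
      rw [this, abs_mul, abs_of_pos (by positivity : (0:ℝ) < ε⁻¹)]
      rw [mul_comm]
      exact le_of_eq (by rfl)
    exact (l1.min_const 1).const_max 0
  -- the Lipschitz cutoff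
  set φ : EuclideanSpace ℝ (Fin d) → ℝ := fun x => c (infDist x A) with hφ
  have hφlip : LipschitzWith k φ := by
    have := hclip.comp (lipschitz_infDist_pt A)
    rw [mul_one] at this
    exact this
  have hφ0 : ∀ x, infDist x A ≤ ε → φ x = 0 := fun x hx => hc0 _ hx
  have hφ1 : ∀ x, 2*ε ≤ infDist x A → φ x = 1 := fun x hx => hc1 _ hx
  -- the bump
  set κ : ContDiffBump (0 : EuclideanSpace ℝ (Fin d)) :=
    ⟨ε/4, ε/2, by positivity, by linarith⟩ with hκ
  have hrOut : κ.rOut = ε/2 := rfl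
  set ψ : EuclideanSpace ℝ (Fin d) → ℝ :=
    convolution (κ.normed volume) φ (ContinuousLinearMap.lsmul ℝ ℝ) volume with hψ
  have hψdef : ∀ x, ψ x = ∫ t, κ.normed volume t * φ (x - t) := by
    intro x; rw [hψ, convolution_def]; rfl
  -- integrability of the integrand
  have hφcont : Continuous φ := hφlip.continuous
  have hint : ∀ x : EuclideanSpace ℝ (Fin d),
      Integrable (fun t => κ.normed volume t * φ (x - t)) volume := by
    intro x
    apply Continuous.integrable_of_hasCompactSupport
    · exact (κ.continuous_normed).mul (hφcont.comp (continuous_const.sub continuous_id))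
    · exact κ.hasCompactSupport_normed.mul_right
  -- smoothness
  have hψc : ContDiff ℝ (⊤ : ℕ∞) ψ := by
    rw [hψ]
    exact HasCompactSupport.contDiff_convolution_left _ κ.hasCompactSupport_normed
      κ.contDiff_normed (hφcont.locallyIntegrable)
  -- value lemmas via constancy on balls
  have heq : ∀ x, (∀ y ∈ ball x κ.rOut, φ y = φ x) → ψ x = φ x := by
    intro x h
    rw [hψ]
    exact ContDiffBump.normed_convolution_eq_right h
  have hψ0 : ∀ x, infDist x A ≤ ε/2 → ψ x = 0 := by
    intro x hx
    have : ψ x = φ x := by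
      apply heq
      intro y hy
      rw [mem_ball, hrOut] at hy
      have h1 : infDist y A ≤ infDist x A + dist y x := infDist_le_infDist_add_dist
      rw [hφ0 y (by linarith), hφ0 x (by linarith)]
    rw [this, hφ0 x (by linarith)]
  have hψ1 : ∀ x, 3*ε ≤ infDist x A → ψ x = 1 := by
    intro x hx
    have : ψ x = φ x := by
      apply heq
      intro y hy
      rw [mem_ball, hrOut] at hy
      have h1 : infDist x A ≤ infDist y A + dist x y := infDist_le_infDist_add_dist
      rw [dist_comm] at h1
      rw [hφ1 y (by linarith), hφ1 x (by linarith)]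
    rw [this, hφ1 x (by linarith)]
  -- bounds
  have hψnn : ∀ x, 0 ≤ ψ x := by
    intro x
    rw [hψdef]
    apply integral_nonneg
    intro t
    exact mul_nonneg (κ.nonneg_normed t) (hcnn _)
  have hψle : ∀ x, ψ x ≤ 1 := by
    intro x
    rw [hψdef]
    calc ∫ t, κ.normed volume t * φ (x - t)
        ≤ ∫ t, κ.normed volume t := by
          apply integral_mono (hint x) κ.integrable_normed
          intro t
          exact mul_le_of_le_one_right (κ.nonneg_normed t) (hcle _)
      _ = 1 := κ.integral_normed
  -- Lipschitz bound for ψ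
  have hψlip : LipschitzWith k ψ := by
    apply LipschitzWith.of_dist_le_mul
    intro x y
    rw [Real.dist_eq, hψdef, hψdef, ← integral_sub (hint x) (hint y)]
    have hsub : ∀ t, κ.normed volume t * φ (x - t) - κ.normed volume t * φ (y - t)
        = κ.normed volume t * (φ (x - t) - φ (y - t)) := fun t => by ring
    simp_rw [hsub]
    have hbd : ∀ t, ‖κ.normed volume t * (φ (x - t) - φ (y - t))‖
        ≤ κ.normed volume t * ((k:ℝ) * dist x y) := by
      intro t
      rw [norm_mul, Real.norm_eq_abs, Real.norm_eq_abs, abs_of_nonneg (κ.nonneg_normed t)]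
      apply mul_le_mul_of_nonneg_left _ (κ.nonneg_normed t)
      have := hφlip.dist_le_mul (x - t) (y - t)
      rw [Real.dist_eq] at this
      rwa [dist_sub_right] at this
    calc |∫ t, κ.normed volume t * (φ (x - t) - φ (y - t))|
        ≤ ∫ t, κ.normed volume t * ((k:ℝ) * dist x y) := by
          rw [← Real.norm_eq_abs]
          exact norm_integral_le_of_norm_le (κ.integrable_normed.mul_const _)
            (Filter.Eventually.of_forall hbd)
      _ = (k:ℝ) * dist x y := by
          rw [integral_mul_const, κ.integral_normed, one_mul]
  have hfd : ∀ x, ‖fderiv ℝ ψ x‖ ≤ ε⁻¹ := fun x => norm_fderiv_le_of_lipschitz ℝ hψlip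
  -- fderiv vanishing
  have hfd0 : ∀ x, infDist x A < ε/2 → fderiv ℝ ψ x = 0 := by
    intro x hx
    have hopen : IsOpen {z : EuclideanSpace ℝ (Fin d) | infDist z A < ε/2} :=
      isOpen_lt (continuous_infDist_pt A) continuous_const
    have hev : ψ =ᶠ[nhds x] (fun _ => (0:ℝ)) := by
      filter_upwards [hopen.mem_nhds hx] with z hz
      exact hψ0 z (le_of_lt hz)
    rw [hev.fderiv_eq, fderiv_fun_const]; rfl
  have hfd1 : ∀ x, 3*ε < infDist x A → fderiv ℝ ψ x = 0 := by
    intro x hx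
    have hopen : IsOpen {z : EuclideanSpace ℝ (Fin d) | 3*ε < infDist z A} :=
      isOpen_lt continuous_const (continuous_infDist_pt A)
    have hev : ψ =ᶠ[nhds x] (fun _ => (1:ℝ)) := by
      filter_upwards [hopen.mem_nhds hx] with z hz
      exact hψ1 z (le_of_lt hz)
    rw [hev.fderiv_eq, fderiv_fun_const]; rfl
  exact ⟨ψ, hψc, hψnn, hψle, hψ0, hψ1, hfd, hfd0, hfd1⟩

lemma setInt_diverg_eq_zero {d : ℕ} (Ω : Set (EuclideanSpace ℝ (Fin d)))
    (hΩopen : IsOpen Ω) (hΩbdd : Bornology.IsBounded Ω)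
    {F : EuclideanSpace ℝ (Fin d) → EuclideanSpace ℝ (Fin d)}
    (hF : ContDiff ℝ (⊤ : ℕ∞) F) (hbc : ∀ x ∈ frontier Ω, F x = 0) :
    ∫ x in Ω, diverg F x = 0 := by
  have hone : ((⊤ : ℕ∞) : WithTop ℕ∞) ≠ 0 := by simp
  rcases eq_or_ne d 0 with hd | hd
  · subst hd
    simp [diverg]
  obtain ⟨n, rfl⟩ := Nat.exists_eq_succ_of_ne_zero hd
  have hΩuniv : Ω ≠ univ := by
    rintro rfl
    exact NormedSpace.unbounded_univ ℝ (EuclideanSpace ℝ (Fin (n+1))) hΩbdd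
  have hcne : Ωᶜ.Nonempty := nonempty_compl.mpr hΩuniv
  have hK0 : IsCompact (closure Ω) := hΩbdd.isCompact_closure
  -- Lipschitz bound for F near Ω
  obtain ⟨R, hR0, hRsub⟩ : ∃ R, 0 < R ∧ closure Ω ⊆ closedBall 0 R := by
    obtain ⟨R, h⟩ := hΩbdd.closure.subset_closedBall 0
    exact ⟨max R 1, lt_of_lt_of_le one_pos (le_max_right _ _),
      h.trans (closedBall_subset_closedBall (le_max_left _ _))⟩
  set K : Set (EuclideanSpace ℝ (Fin (n+1))) := closedBall 0 (3*R+3) with hKdef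
  have hKconv : Convex ℝ K := convex_closedBall _ _
  have hKcomp : IsCompact K := isCompact_closedBall _ _
  obtain ⟨M, hM⟩ := hKcomp.exists_bound_of_continuousOn (hF.continuous_fderiv hone).continuousOn
  set L : NNReal := ⟨max M 0, le_max_right M 0⟩ with hLdef
  have hLb : ∀ x ∈ K, ‖fderiv ℝ F x‖₊ ≤ L := by
    intro x hx
    have h1 : ‖fderiv ℝ F x‖ ≤ (L : ℝ) := le_trans (hM x hx) (le_max_left M 0)
    exact_mod_cast h1
  have hlip : LipschitzOnWith L F K :=
    Convex.lipschitzOnWith_of_nnnorm_fderiv_le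
      (fun x _ => (hF.differentiable hone).differentiableAt) hLb hKconv
  have hΩK : closure Ω ⊆ K := hRsub.trans (closedBall_subset_closedBall (by linarith))
  have hFbound : ∀ x ∈ Ω, ‖F x‖ ≤ (L:ℝ) * infDist x Ωᶜ := by
    intro x hx
    obtain ⟨y, hyf, hyd⟩ := exists_mem_frontier_infDist_compl_eq_dist hx hΩuniv
    have hFy : F y = 0 := hbc y hyf
    have hxK : x ∈ K := hΩK (subset_closure hx)
    have hyK : y ∈ K := hΩK hyf.1
    calc ‖F x‖ = dist (F x) (F y) := by rw [hFy, dist_zero_right]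
      _ ≤ (L:ℝ) * dist x y := hlip.dist_le_mul x hxK y hyK
      _ = (L:ℝ) * infDist x Ωᶜ := by rw [hyd]
  -- epsilon sequence and cutoffs
  set ε : ℕ → ℝ := fun m => 1/(m+1) with hεdef
  have hεpos : ∀ m, 0 < ε m := fun m => by positivity
  choose ψ hψc hψnn hψle hψ0 hψ1 hψfd hψfd0 hψfd1 using fun m => cutoff_exists Ωᶜ (hεpos m)
  have hsupp0 : ∀ m, ∀ x ∉ Ω, ψ m x = 0 := by
    intro m x hx
    apply hψ0 m x
    have hx' : x ∈ Ωᶜ := hx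
    rw [infDist_zero_of_mem hx']
    positivity
  have hψsupp : ∀ m, HasCompactSupport (ψ m) := fun m =>
    HasCompactSupport.intro hK0 (fun x hx => hsupp0 m x (fun hxo => hx (subset_closure hxo)))
  -- the vanishing identity per m
  have hsmul : ∀ m, ContDiff ℝ (⊤:ℕ∞) (fun y => ψ m y • F y) := fun m => (hψc m).smul hF
  have hsmulsupp : ∀ m, HasCompactSupport (fun y => ψ m y • F y) := fun m =>
    (hψsupp m).smul_right
  have hzero : ∀ m, ∫ x, diverg (fun y => ψ m y • F y) x = 0 := fun m =>
    euclid_div_int_zero _ (hsmul m) (hsmulsupp m)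
  have hpoint : ∀ m x, diverg (fun y => ψ m y • F y) x
      = ψ m x * diverg F x + fderiv ℝ (ψ m) x (F x) := fun m x =>
    diverg_smul _ _ x ((hψc m).differentiable hone).differentiableAt
      ((hF.differentiable hone).differentiableAt)
  have hdivFc : Continuous (diverg F) := continuous_diverg hF
  have hi1 : ∀ m, Integrable (fun x => ψ m x * diverg F x) := fun m =>
    ((hψc m).continuous.mul hdivFc).integrable_of_hasCompactSupport ((hψsupp m).mul_right)
  have hgcont : ∀ m, Continuous (fun x => fderiv ℝ (ψ m) x (F x)) := fun m =>
    ((hψc m).continuous_fderiv hone).clm_apply hF.continuous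
  have hgKsupp : ∀ m, ∀ x ∉ closure Ω, fderiv ℝ (ψ m) x (F x) = 0 := by
    intro m x hx
    have hxΩ : x ∈ Ωᶜ := fun h => hx (subset_closure h)
    have h2 : infDist x Ωᶜ = 0 := infDist_zero_of_mem hxΩ
    rw [hψfd0 m x (by rw [h2]; positivity)]
    simp
  have hgsupp : ∀ m, HasCompactSupport (fun x => fderiv ℝ (ψ m) x (F x)) := fun m =>
    HasCompactSupport.intro hK0 (hgKsupp m)
  have hi2 : ∀ m, Integrable (fun x => fderiv ℝ (ψ m) x (F x)) := fun m =>
    (hgcont m).integrable_of_hasCompactSupport (hgsupp m)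
  have hsplit : ∀ m, (∫ x in Ω, ψ m x * diverg F x) + (∫ x, fderiv ℝ (ψ m) x (F x)) = 0 := by
    intro m
    have h1 : ∫ x, diverg (fun y => ψ m y • F y) x
        = (∫ x, ψ m x * diverg F x) + ∫ x, fderiv ℝ (ψ m) x (F x) := by
      rw [← integral_add (hi1 m) (hi2 m)]
      exact integral_congr_ae (Filter.Eventually.of_forall (fun x => hpoint m x))
    have h2 : ∫ x in Ω, ψ m x * diverg F x = ∫ x, ψ m x * diverg F x :=
      setIntegral_eq_integral_of_forall_compl_eq_zero
        (fun x hx => by rw [hsupp0 m x hx, zero_mul])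
    rw [h2, ← h1, hzero m]
  -- limit of first term
  have hIntDivF : IntegrableOn (diverg F) Ω volume :=
    (hdivFc.continuousOn.integrableOn_compact hK0).mono_set subset_closure
  have hinfpos : ∀ x ∈ Ω, 0 < infDist x Ωᶜ := by
    intro x hx
    exact (IsClosed.notMem_iff_infDist_pos hΩopen.isClosed_compl hcne).mp (by simpa using hx)
  have han : Tendsto (fun m => ∫ x in Ω, ψ m x * diverg F x) atTop
      (𝓝 (∫ x in Ω, diverg F x)) := by
    apply tendsto_integral_of_dominated_convergence (fun x => |diverg F x|)
    · exact fun m => ((hψc m).continuous.mul hdivFc).aestronglyMeasurable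
    · exact hIntDivF.abs
    · intro m
      apply Filter.Eventually.of_forall
      intro x
      rw [Real.norm_eq_abs, abs_mul]
      calc |ψ m x| * |diverg F x| ≤ 1 * |diverg F x| := by
            apply mul_le_mul_of_nonneg_right _ (abs_nonneg _)
            rw [abs_of_nonneg (hψnn m x)]
            exact hψle m x
        _ = |diverg F x| := one_mul _
    · rw [ae_restrict_iff' hΩopen.measurableSet]
      apply Filter.Eventually.of_forall
      intro x hx
      have hpos := hinfpos x hx
      obtain ⟨N, hN⟩ := exists_nat_gt (3 / infDist x Ωᶜ)
      have hconst : Tendsto (fun _ : ℕ => diverg F x) atTop (𝓝 (diverg F x)) :=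
        tendsto_const_nhds
      apply hconst.congr'
      rw [Filter.EventuallyEq, eventually_atTop]
      refine ⟨N, fun m hm => ?_⟩
      have h3 : 3 * ε m ≤ infDist x Ωᶜ := by
        rw [hεdef]
        have hm1 : (3 / infDist x Ωᶜ) < (m:ℝ) + 1 := by
          calc (3 / infDist x Ωᶜ) < (N:ℝ) := hN
            _ ≤ (m:ℝ) := by exact_mod_cast hm
            _ ≤ m + 1 := by linarith
        rw [div_lt_iff₀ hpos] at hm1
        have hm2 : (0:ℝ) < (m:ℝ) + 1 := by positivity
        rw [show (3:ℝ) * (1/(m+1)) = 3 / (m+1) by ring, div_le_iff₀ hm2]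
        nlinarith
      rw [hψ1 m x h3, one_mul]
  -- second term tends to 0
  set B : ℕ → Set (EuclideanSpace ℝ (Fin (n+1))) :=
    fun m => Ω ∩ {x | infDist x Ωᶜ ≤ 3 * ε m} with hBdef
  have hBmeas : ∀ m, MeasurableSet (B m) := fun m =>
    hΩopen.measurableSet.inter
      (isClosed_le (continuous_infDist_pt _) continuous_const).measurableSet
  have hBfin : ∀ m, volume (B m) < ⊤ := fun m =>
    lt_of_le_of_lt (measure_mono (inter_subset_left.trans subset_closure)) hK0.measure_lt_top
  have hBanti : Antitone B := by
    intro m m' hmm'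
    apply inter_subset_inter_right
    intro x hx
    simp only [mem_setOf_eq] at hx ⊢
    have hee : ε m' ≤ ε m := by
      rw [hεdef]
      apply one_div_le_one_div_of_le (by positivity)
      have : (m:ℝ) ≤ m' := by exact_mod_cast hmm'
      linarith
    linarith
  have hBempty : ⋂ m, B m = ∅ := by
    ext x
    simp only [mem_iInter, mem_empty_iff_false, iff_false]
    intro h
    have hx := (h 0).1
    have hpos := hinfpos x hx
    obtain ⟨N, hN⟩ := exists_nat_gt (3 / infDist x Ωᶜ)
    have h2 := (h N).2
    simp only [mem_setOf_eq] at h2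
    rw [hεdef] at h2
    have hN1 : (0:ℝ) < (N:ℝ) + 1 := by positivity
    rw [div_lt_iff₀ hpos] at hN
    have : 3 * (1/((N:ℝ)+1)) = 3/((N:ℝ)+1) := by ring
    rw [this, le_div_iff₀ hN1] at h2
    nlinarith
  have hμB : Tendsto (fun m => volume (B m)) atTop (𝓝 0) := by
    have := tendsto_measure_iInter_atTop (μ := volume)
      (fun m => (hBmeas m).nullMeasurableSet) hBanti ⟨0, (hBfin 0).ne⟩
    rw [hBempty] at this
    simpa [Function.comp_def] using this
  have hμBr : Tendsto (fun m => (volume (B m)).toReal) atTop (𝓝 0) := by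
    have h0 : ((0:ENNReal)).toReal = 0 := rfl
    have := (ENNReal.tendsto_toReal (by simp : (0:ENNReal) ≠ ⊤)).comp hμB
    simpa [Function.comp_def] using this
  have hgn0 : ∀ m, ∀ x ∉ B m, fderiv ℝ (ψ m) x (F x) = 0 := by
    intro m x hx
    rw [hBdef] at hx
    simp only [mem_inter_iff, mem_setOf_eq, not_and_or] at hx
    rcases hx with hx | hx
    · have hx' : x ∈ Ωᶜ := hx
      have h2 : infDist x Ωᶜ = 0 := infDist_zero_of_mem hx'
      rw [hψfd0 m x (by rw [h2]; positivity)]; simp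
    · push_neg at hx
      rw [hψfd1 m x hx]; simp
  have hbnb : ∀ m, ‖∫ x, fderiv ℝ (ψ m) x (F x)‖ ≤ 3 * (L:ℝ) * (volume (B m)).toReal := by
    intro m
    rw [← setIntegral_eq_integral_of_forall_compl_eq_zero (hgn0 m)]
    have hb : ∀ x ∈ B m, ‖fderiv ℝ (ψ m) x (F x)‖ ≤ 3 * (L:ℝ) := by
      intro x hx
      obtain ⟨hxΩ, hxd⟩ := hx
      calc ‖fderiv ℝ (ψ m) x (F x)‖ ≤ ‖fderiv ℝ (ψ m) x‖ * ‖F x‖ :=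
            ContinuousLinearMap.le_opNorm _ _
        _ ≤ (ε m)⁻¹ * ((L:ℝ) * (3 * ε m)) := by
            apply mul_le_mul (hψfd m x) _ (norm_nonneg _) (by positivity)
            calc ‖F x‖ ≤ (L:ℝ) * infDist x Ωᶜ := hFbound x hxΩ
              _ ≤ (L:ℝ) * (3 * ε m) := by
                  apply mul_le_mul_of_nonneg_left _ (L.coe_nonneg)
                  exact hxd
        _ = 3 * (L:ℝ) := by
            field_simp
            rw [mul_comm (ε m), mul_div_cancel_right₀ _ (hεpos m).ne']
    exact norm_setIntegral_le_of_norm_le_const (hBfin m) hb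
  have hbn0 : Tendsto (fun m => ∫ x, fderiv ℝ (ψ m) x (F x)) atTop (𝓝 0) := by
    apply squeeze_zero_norm hbnb
    have := hμBr.const_mul (3 * (L:ℝ))
    simpa using this
  -- conclude
  have hlim : Tendsto (fun m => (∫ x in Ω, ψ m x * diverg F x) + ∫ x, fderiv ℝ (ψ m) x (F x))
      atTop (𝓝 ((∫ x in Ω, diverg F x) + 0)) := han.add hbn0
  have hlim0 : Tendsto (fun _ : ℕ => (0:ℝ)) atTop (𝓝 ((∫ x in Ω, diverg F x) + 0)) := by
    apply hlim.congr
    intro m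
    exact hsplit m
  have := tendsto_nhds_unique hlim0 tendsto_const_nhds
  linarith

lemma memL2_integrable_mul {α : Type*} [MeasurableSpace α] {μ : Measure α} {f g : α → ℝ}
    (hf : MemLp f 2 μ) (hg : MemLp g 2 μ) : Integrable (fun x => f x * g x) μ := by
  have h := MeasureTheory.L2.integrable_inner (𝕜 := ℝ) (hf.toLp f) (hg.toLp g)
  apply h.congr
  filter_upwards [hf.coeFn_toLp, hg.coeFn_toLp] with x hx hy
  rw [hx, hy, RCLike.inner_apply, conj_trivial, mul_comm]

theorem stmt_2 {d : ℕ} (Ω : Set (EuclideanSpace ℝ (Fin d)))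
    (hΩopen : IsOpen Ω) (hΩbdd : Bornology.IsBounded Ω)
    (ρn ρn1 : EuclideanSpace ℝ (Fin d) → ℝ)
    (un : EuclideanSpace ℝ (Fin d) → EuclideanSpace ℝ (Fin d))
    (τ : ℝ) (hτ : 0 < τ)
    (hρn : ContDiff ℝ (⊤ : ℕ∞) ρn) (hρn1 : ContDiff ℝ (⊤ : ℕ∞) ρn1) (hun : ContDiff ℝ (⊤ : ℕ∞) un)
    (hbc : ∀ x ∈ frontier Ω, un x = 0)
    (hρnL2 : MemLp ρn 2 (volume.restrict Ω)) (hρn1L2 : MemLp ρn1 2 (volume.restrict Ω))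
    (hscheme : ∀ x ∈ Ω,
      (ρn1 x - ρn x) / τ + diverg (fun y => ρn1 y • un y) x - ρn1 x / 2 * diverg un x = 0) :
    (∫ x in Ω, (ρn1 x) ^ 2) - (∫ x in Ω, (ρn x) ^ 2)
        + (∫ x in Ω, (ρn1 x - ρn x) ^ 2) = 0
      ∧ (∫ x in Ω, (ρn1 x) ^ 2) ≤ ∫ x in Ω, (ρn x) ^ 2 := by
  have hone : ((⊤ : ℕ∞) : WithTop ℕ∞) ≠ 0 := by simp
  have hρ : ContDiff ℝ (⊤ : ℕ∞) ρn1 := hρn1.of_le (by simp)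
  have hu : ContDiff ℝ (⊤ : ℕ∞) un := hun.of_le (by simp)
  set F : EuclideanSpace ℝ (Fin d) → EuclideanSpace ℝ (Fin d) :=
    fun y => ρn1 y • (ρn1 y • un y) with hFdef
  have hF : ContDiff ℝ (⊤ : ℕ∞) F := hρ.smul (hρ.smul hu)
  have hFbc : ∀ x ∈ frontier Ω, F x = 0 := by
    intro x hx
    rw [hFdef]
    simp only [hbc x hx, smul_zero]
  have hzero : ∫ x in Ω, diverg F x = 0 := setInt_diverg_eq_zero Ω hΩopen hΩbdd hF hFbc
  -- pointwise identity
  have hdρ : ∀ x, DifferentiableAt ℝ ρn1 x := fun x => (hρ.differentiable hone).differentiableAt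
  have hdu : ∀ x, DifferentiableAt ℝ un x := fun x => (hu.differentiable hone).differentiableAt
  have hdρu : ∀ x, DifferentiableAt ℝ (fun y => ρn1 y • un y) x := fun x =>
    (hdρ x).smul (hdu x)
  have hform : ∀ x, diverg F x
      = 2 * ρn1 x * diverg (fun y => ρn1 y • un y) x - (ρn1 x)^2 * diverg un x := by
    intro x
    have h1 : diverg F x = ρn1 x * diverg (fun y => ρn1 y • un y) x
        + fderiv ℝ ρn1 x (ρn1 x • un x) := diverg_smul _ _ x (hdρ x) (hdρu x)
    have h2 : diverg (fun y => ρn1 y • un y) x = ρn1 x * diverg un x + fderiv ℝ ρn1 x (un x) :=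
      diverg_smul _ _ x (hdρ x) (hdu x)
    have h3 : fderiv ℝ ρn1 x (ρn1 x • un x) = ρn1 x * fderiv ℝ ρn1 x (un x) := by
      rw [_root_.map_smul, smul_eq_mul]
    rw [h1, h3, h2]
    ring
  have hτ' : τ ≠ 0 := ne_of_gt hτ
  have hptΩ : ∀ x ∈ Ω, diverg F x = -(2/τ) * (ρn1 x * (ρn1 x - ρn x)) := by
    intro x hx
    have h1 := hscheme x hx
    rw [hform x]
    linear_combination (2 * ρn1 x) * h1
  -- conclude ∫ ρn1 (ρn1 - ρn) = 0
  have hIμ : ∫ x in Ω, ρn1 x * (ρn1 x - ρn x) = 0 := by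
    have hcong : ∫ x in Ω, diverg F x = ∫ x in Ω, -(2/τ) * (ρn1 x * (ρn1 x - ρn x)) :=
      setIntegral_congr_fun hΩopen.measurableSet (fun x hx => hptΩ x hx)
    rw [hcong, integral_const_mul] at hzero
    rcases mul_eq_zero.mp hzero with h | h
    · exfalso
      apply hτ'
      field_simp at h
      simp at h
    · exact h
  -- integrabilities
  have I11 : Integrable (fun x => ρn1 x * ρn1 x) (volume.restrict Ω) :=
    memL2_integrable_mul hρn1L2 hρn1L2
  have I10 : Integrable (fun x => ρn1 x * ρn x) (volume.restrict Ω) :=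
    memL2_integrable_mul hρn1L2 hρnL2
  have I00 : Integrable (fun x => ρn x * ρn x) (volume.restrict Ω) :=
    memL2_integrable_mul hρnL2 hρnL2
  have IA : Integrable (fun x => (ρn1 x)^2) (volume.restrict Ω) := by
    simpa [sq] using I11
  have IB : Integrable (fun x => (ρn x)^2) (volume.restrict Ω) := by
    simpa [sq] using I00
  have IC : Integrable (fun x => (ρn1 x - ρn x)^2) (volume.restrict Ω) := by
    have h := (I11.sub I10).sub (I10.sub I00)
    apply h.congr
    apply Filter.Eventually.of_forall
    intro x
    simp only [Pi.sub_apply]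
    ring
  have Ih : Integrable (fun x => ρn1 x * (ρn1 x - ρn x)) (volume.restrict Ω) := by
    have h := I11.sub I10
    apply h.congr
    apply Filter.Eventually.of_forall
    intro x
    simp only [Pi.sub_apply]
    ring
  -- main identity
  have hmain : (∫ x in Ω, (ρn1 x) ^ 2) - (∫ x in Ω, (ρn x) ^ 2)
      + (∫ x in Ω, (ρn1 x - ρn x) ^ 2) = 0 := by
    have h1 : ∫ x in Ω, ((ρn1 x)^2 - (ρn x)^2 + (ρn1 x - ρn x)^2)
        = (∫ x in Ω, (ρn1 x) ^ 2) - (∫ x in Ω, (ρn x) ^ 2)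
        + (∫ x in Ω, (ρn1 x - ρn x) ^ 2) := by
      have IAB : Integrable (fun x => (ρn1 x)^2 - (ρn x)^2) (volume.restrict Ω) := IA.sub IB
      rw [integral_add IAB IC, integral_sub IA IB]
    have h2 : ∫ x in Ω, ((ρn1 x)^2 - (ρn x)^2 + (ρn1 x - ρn x)^2)
        = ∫ x in Ω, 2 * (ρn1 x * (ρn1 x - ρn x)) := by
      apply integral_congr_ae
      apply Filter.Eventually.of_forall
      intro x
      ring
    rw [← h1, h2, integral_const_mul, hIμ, mul_zero]
  refine ⟨hmain, ?_⟩
  have hC : 0 ≤ ∫ x in Ω, (ρn1 x - ρn x) ^ 2 :=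
    integral_nonneg (fun x => sq_nonneg _)
  linarith
end

section
/- Let u : ℝ → E be five times continuously differentiable and τ > 0. Then the correction identity (u(t+τ) - u(t))/τ + (τ/2)·(u'(t+τ) - u'(t))/τ + (τ²/12)·(u''(t+τ) - u''(t))/τ = u'(t+τ) + O(τ⁴) holds. -/
open Set

lemma aux_iterated_iterated {E : Type*} [NormedAddCommGroup E] [NormedSpace ℝ E]
    (f : ℝ → E) (k m : ℕ) :
    iteratedDeriv m (iteratedDeriv k f) = iteratedDeriv (m + k) f := by
  induction m with
  | zero => simp
  | succ m ih => rw [iteratedDeriv_succ, ih, ← iteratedDeriv_succ]; ring_nf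

lemma aux_contDiff_shift {E : Type*} [NormedAddCommGroup E] [NormedSpace ℝ E]
    {f : ℝ → E} {k n : ℕ} (hf : ContDiff ℝ (n + k : ℕ) f) :
    ContDiff ℝ (n : ℕ) (iteratedDeriv k f) := by
  rw [contDiff_nat_iff_iteratedDeriv] at hf ⊢
  refine ⟨fun m hm => ?_, fun m hm => ?_⟩
  · rw [aux_iterated_iterated]; exact hf.1 _ (by omega)
  · rw [aux_iterated_iterated]; exact hf.2 _ (by omega)

lemma aux_iterWithin {E : Type*} [NormedAddCommGroup E] [NormedSpace ℝ E]
    {f : ℝ → E} {n : ℕ} (hf : ContDiff ℝ (n : ℕ) f) {s : Set ℝ} (hs : UniqueDiffOn ℝ s)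
    {x : ℝ} (hx : x ∈ s) {k : ℕ} (hk : k ≤ n) :
    iteratedDerivWithin k f s x = iteratedDeriv k f x := by
  have h := ((contDiff_iff_ftaylorSeries.mp (by exact_mod_cast hf)).hasFTaylorSeriesUpToOn s).eq_iteratedFDerivWithin_of_uniqueDiffOn
    (by exact_mod_cast hk) hs hx
  simp only [iteratedDerivWithin, iteratedDeriv, ← h]; rfl

theorem stmt_14 {E : Type*} [NormedAddCommGroup E] [NormedSpace ℝ E]
    (u : ℝ → E) (hu : ContDiff ℝ 5 u) (t : ℝ) :
    ∃ C > 0, ∃ τ0 > 0, ∀ τ : ℝ, 0 < τ → τ < τ0 →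
      ‖(τ⁻¹ • (u (t + τ) - u t)
          + (τ / 2) • (τ⁻¹ • (deriv u (t + τ) - deriv u t))
          + (τ ^ 2 / 12) • (τ⁻¹ • (iteratedDeriv 2 u (t + τ) - iteratedDeriv 2 u t)))
        - deriv u (t + τ)‖ ≤ C * τ ^ 4 := by
  have hu5 : ContDiff ℝ (5 : ℕ) u := by exact_mod_cast hu
  have hd1 : deriv u = iteratedDeriv 1 u := iteratedDeriv_one.symm
  have hu4 : ContDiff ℝ (4 : ℕ) (deriv u) := by
    rw [hd1]; exact aux_contDiff_shift (n := 4) (k := 1) hu5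
  have hu3 : ContDiff ℝ (3 : ℕ) (iteratedDeriv 2 u) :=
    aux_contDiff_shift (n := 3) (k := 2) hu5
  set s : Set ℝ := Icc t (t + 1) with hsdef
  have hab : t ≤ t + 1 := by linarith
  have hs : UniqueDiffOn ℝ s := uniqueDiffOn_Icc (by linarith)
  have ht : t ∈ s := ⟨le_refl t, hab⟩
  obtain ⟨C0, h0⟩ := exists_taylor_mean_remainder_bound (n := 4) hab hu5.contDiffOn
  obtain ⟨C1, h1⟩ := exists_taylor_mean_remainder_bound (n := 3) hab hu4.contDiffOn
  obtain ⟨C2, h2⟩ := exists_taylor_mean_remainder_bound (n := 2) hab hu3.contDiffOn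
  have hb : t + 1 ∈ s := ⟨hab, le_refl _⟩
  have hC0 : 0 ≤ C0 := le_trans (norm_nonneg _) (by simpa only [add_sub_cancel_left, one_pow, mul_one] using h0 _ hb)
  have hC1 : 0 ≤ C1 := le_trans (norm_nonneg _) (by simpa only [add_sub_cancel_left, one_pow, mul_one] using h1 _ hb)
  have hC2 : 0 ≤ C2 := le_trans (norm_nonneg _) (by simpa only [add_sub_cancel_left, one_pow, mul_one] using h2 _ hb)
  refine ⟨C0 + C1 / 2 + C2 / 12 + 1, by positivity, 1, one_pos, fun τ hτ hτ1 => ?_⟩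
  have hτ0 : τ ≠ 0 := ne_of_gt hτ
  have hxs : t + τ ∈ s := ⟨by linarith, by linarith⟩
  set R0 : E := u (t + τ) - taylorWithinEval u 4 s t (t + τ) with hR0def
  set R1 : E := deriv u (t + τ) - taylorWithinEval (deriv u) 3 s t (t + τ) with hR1def
  set R2 : E := iteratedDeriv 2 u (t + τ) - taylorWithinEval (iteratedDeriv 2 u) 2 s t (t + τ)
    with hR2def
  have hR0 : ‖R0‖ ≤ C0 * τ ^ 5 := by simpa only [add_sub_cancel_left] using h0 _ hxs
  have hR1 : ‖R1‖ ≤ C1 * τ ^ 4 := by simpa only [add_sub_cancel_left] using h1 _ hxs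
  have hR2 : ‖R2‖ ≤ C2 * τ ^ 3 := by simpa only [add_sub_cancel_left] using h2 _ hxs
  have e0 : u (t + τ) = taylorWithinEval u 4 s t (t + τ) + R0 := by rw [hR0def]; abel
  have e1 : deriv u (t + τ) = taylorWithinEval (deriv u) 3 s t (t + τ) + R1 := by
    rw [hR1def]; abel
  have e2 : iteratedDeriv 2 u (t + τ) = taylorWithinEval (iteratedDeriv 2 u) 2 s t (t + τ) + R2 :=
    by rw [hR2def]; abel
  have hw0 : ∀ k : ℕ, k ≤ 5 → iteratedDerivWithin k u s t = iteratedDeriv k u t :=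
    fun k hk => aux_iterWithin hu5 hs ht hk
  have hw1 : ∀ k : ℕ, k ≤ 4 → iteratedDerivWithin k (deriv u) s t = iteratedDeriv (k + 1) u t :=
    fun k hk => by
      rw [aux_iterWithin hu4 hs ht hk, hd1, aux_iterated_iterated]
  have hw2 : ∀ k : ℕ, k ≤ 3 →
      iteratedDerivWithin k (iteratedDeriv 2 u) s t = iteratedDeriv (k + 2) u t :=
    fun k hk => by rw [aux_iterWithin hu3 hs ht hk, aux_iterated_iterated]
  have hdt : deriv u t = iteratedDeriv 1 u t := by rw [hd1]
  have key : (τ⁻¹ • (u (t + τ) - u t)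
          + (τ / 2) • (τ⁻¹ • (deriv u (t + τ) - deriv u t))
          + (τ ^ 2 / 12) • (τ⁻¹ • (iteratedDeriv 2 u (t + τ) - iteratedDeriv 2 u t)))
        - deriv u (t + τ) = τ⁻¹ • R0 - (2⁻¹ : ℝ) • R1 + (τ / 12) • R2 := by
    rw [e0, e1, e2, taylor_within_apply, taylor_within_apply, taylor_within_apply]
    simp only [Finset.sum_range_succ, Finset.sum_range_zero,
      hw0 0 (by norm_num), hw0 1 (by norm_num), hw0 2 (by norm_num), hw0 3 (by norm_num),
      hw0 4 (by norm_num),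
      hw1 0 (by norm_num), hw1 1 (by norm_num), hw1 2 (by norm_num), hw1 3 (by norm_num),
      hw2 0 (by norm_num), hw2 1 (by norm_num), hw2 2 (by norm_num),
      hdt, iteratedDeriv_zero, add_sub_cancel_left]
    norm_num [Nat.factorial]
    match_scalars <;> field_simp <;> ring
  rw [key]
  have hb0 : ‖τ⁻¹ • R0‖ ≤ C0 * τ ^ 4 := by
    rw [norm_smul, Real.norm_eq_abs, abs_of_pos (inv_pos.mpr hτ)]
    calc τ⁻¹ * ‖R0‖ ≤ τ⁻¹ * (C0 * τ ^ 5) := by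
          exact mul_le_mul_of_nonneg_left hR0 (le_of_lt (inv_pos.mpr hτ))
      _ = C0 * τ ^ 4 := by field_simp
  have hb1 : ‖(2⁻¹ : ℝ) • R1‖ ≤ C1 / 2 * τ ^ 4 := by
    rw [norm_smul, Real.norm_eq_abs]
    rw [abs_of_pos (by norm_num : (0:ℝ) < 2⁻¹)]
    nlinarith [hR1]
  have hb2 : ‖(τ / 12) • R2‖ ≤ C2 / 12 * τ ^ 4 := by
    rw [norm_smul, Real.norm_eq_abs, abs_of_pos (by positivity : (0:ℝ) < τ / 12)]
    calc τ / 12 * ‖R2‖ ≤ τ / 12 * (C2 * τ ^ 3) := by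
          exact mul_le_mul_of_nonneg_left hR2 (by positivity)
      _ = C2 / 12 * τ ^ 4 := by ring
  calc ‖τ⁻¹ • R0 - (2⁻¹ : ℝ) • R1 + (τ / 12) • R2‖
      ≤ ‖τ⁻¹ • R0 - (2⁻¹ : ℝ) • R1‖ + ‖(τ / 12) • R2‖ := norm_add_le _ _
    _ ≤ ‖τ⁻¹ • R0‖ + ‖(2⁻¹ : ℝ) • R1‖ + ‖(τ / 12) • R2‖ := by
        have := norm_sub_le (τ⁻¹ • R0) ((2⁻¹ : ℝ) • R1); linarith
    _ ≤ C0 * τ ^ 4 + C1 / 2 * τ ^ 4 + C2 / 12 * τ ^ 4 := by linarith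
    _ ≤ (C0 + C1 / 2 + C2 / 12 + 1) * τ ^ 4 := by nlinarith
end

section
/- Let u : ℝ → E be four times continuously differentiable and τ > 0. Then (u(t+τ) - u(t))/τ + (τ/2)·(u'(t+τ) - u'(t))/τ + (τ²/12)·(u''(t+τ) - u''(t))/τ - u'(t+τ) = O(τ³) with an explicit bound C·τ³·sup‖u⁗‖ on [t, t+τ]. -/
open Set
open scoped Nat

private lemma iDW_eq {E : Type*} [NormedAddCommGroup E] [NormedSpace ℝ E]
    {f : ℝ → E} {N : ℕ} (hf : ContDiff ℝ (N : ℕ) f) {a b : ℝ} (hab : a < b)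
    {m : ℕ} (hm : m ≤ N) {x : ℝ} (hx : x ∈ Icc a b) :
    iteratedDerivWithin m f (Icc a b) x = iteratedDeriv m f x := by
  rw [iteratedDerivWithin_eq_iteratedFDerivWithin, iteratedDeriv_eq_iteratedFDeriv]
  congr 1
  have hf' : ContDiff ℝ (N : ℕ∞) f := by exact_mod_cast hf
  have h := (contDiff_iff_ftaylorSeries.mp hf').hasFTaylorSeriesUpToOn (Icc a b)
  exact (h.eq_iteratedFDerivWithin_of_uniqueDiffOn (by exact_mod_cast hm)
    (uniqueDiffOn_Icc hab) hx).symm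

private lemma taylor_bound' {E : Type*} [NormedAddCommGroup E] [NormedSpace ℝ E]
    {f : ℝ → E} {n : ℕ} (hf : ContDiff ℝ ((n + 1 : ℕ) : ℕ) f) {t τ M : ℝ} (hτ : 0 < τ)
    (hM : ∀ y ∈ Icc t (t + τ), ‖iteratedDeriv (n + 1) f y‖ ≤ M) :
    ‖f (t + τ) - ∑ k ∈ Finset.range (n + 1), ((k ! : ℝ)⁻¹ * τ ^ k) • iteratedDeriv k f t‖
      ≤ M * τ ^ (n + 1) / n ! := by
  have hab : t ≤ t + τ := by linarith
  have hlt : t < t + τ := by linarith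
  have e : taylorWithinEval f n (Icc t (t + τ)) t (t + τ)
      = ∑ k ∈ Finset.range (n + 1), ((k ! : ℝ)⁻¹ * τ ^ k) • iteratedDeriv k f t := by
    rw [taylor_within_apply]
    refine Finset.sum_congr rfl fun k hk => ?_
    rw [iDW_eq hf hlt ((Nat.le_of_lt_succ (Finset.mem_range.mp hk)).trans (Nat.le_succ n))
      (left_mem_Icc.mpr hab), add_sub_cancel_left]
  have h := taylor_mean_remainder_bound (f := f) (a := t) (b := t + τ) (x := t + τ) (n := n)
    (C := M) hab (by exact_mod_cast hf.contDiffOn) (right_mem_Icc.mpr hab) ?_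
  · rw [e] at h
    simpa [add_sub_cancel_left] using h
  · intro y hy
    rw [iDW_eq hf hlt le_rfl hy]
    exact hM y hy

theorem stmt_15 {E : Type*} [NormedAddCommGroup E] [NormedSpace ℝ E] :
    ∃ C > 0, ∀ u : ℝ → E, ContDiff ℝ 4 u → ∀ t τ : ℝ, 0 < τ →
      ‖(τ⁻¹ • (u (t + τ) - u t)
          + (τ / 2) • (τ⁻¹ • (deriv u (t + τ) - deriv u t))
          + (τ ^ 2 / 12) • (τ⁻¹ • (iteratedDeriv 2 u (t + τ) - iteratedDeriv 2 u t)))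
        - deriv u (t + τ)‖
      ≤ C * τ ^ 3 * (⨆ s ∈ Set.Icc t (t + τ), ‖iteratedDeriv 4 u s‖) := by
  refine ⟨1, one_pos, fun u hu t τ hτ => ?_⟩
  have hab : t ≤ t + τ := by linarith
  -- smoothness of iterated derivatives
  have hder : ∀ j k : ℕ, j + k = 4 → ContDiff ℝ (j : ℕ) (iteratedDeriv k u) := by
    intro j k h
    rw [iteratedDeriv_eq_iterate]
    exact ContDiff.iterate_deriv' j k (by rw [h]; exact_mod_cast hu)
  have comp : ∀ j k : ℕ, iteratedDeriv k (iteratedDeriv j u) = iteratedDeriv (k + j) u := by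
    intro j k
    rw [iteratedDeriv_eq_iterate, iteratedDeriv_eq_iterate, iteratedDeriv_eq_iterate,
      Function.iterate_add_apply]
  -- the sup bound
  set M := ⨆ s ∈ Set.Icc t (t + τ), ‖iteratedDeriv 4 u s‖ with hMdef
  obtain ⟨B, hB⟩ := isCompact_Icc.exists_bound_of_continuousOn
    (f := iteratedDeriv 4 u) (s := Icc t (t + τ)) ((hder 0 4 rfl).continuous.continuousOn)
  have bdd : BddAbove (Set.range fun s => ⨆ _ : s ∈ Icc t (t + τ), ‖iteratedDeriv 4 u s‖) := by
    refine ⟨max B 0, ?_⟩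
    rintro _ ⟨s, rfl⟩
    show (⨆ _ : s ∈ Icc t (t + τ), ‖iteratedDeriv 4 u s‖) ≤ max B 0
    by_cases hs : s ∈ Icc t (t + τ)
    · rw [ciSup_pos hs]
      exact le_max_of_le_left (hB s hs)
    · haveI : IsEmpty (s ∈ Icc t (t + τ)) := ⟨hs⟩
      rw [iSup, Set.range_eq_empty, Real.sSup_empty]
      exact le_max_right _ _
  have hM : ∀ y ∈ Icc t (t + τ), ‖iteratedDeriv 4 u y‖ ≤ M := fun y hy =>
    le_trans (le_of_eq (ciSup_pos (f := fun _ => ‖iteratedDeriv 4 u y‖) hy).symm) (le_ciSup bdd y)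
  have hM0 : 0 ≤ M := le_trans (norm_nonneg _) (hM t (left_mem_Icc.mpr hab))
  -- three Taylor estimates
  have h0 := taylor_bound' (f := u) (n := 3) (by exact_mod_cast hu) hτ
    (fun y hy => hM y hy)
  have hc1 : ContDiff ℝ ((2 + 1 : ℕ) : ℕ) (deriv u) := by
    have := hder 3 1 rfl
    rwa [iteratedDeriv_one] at this
  have hb1 : ∀ y ∈ Icc t (t + τ), ‖iteratedDeriv (2 + 1) (deriv u) y‖ ≤ M := by
    intro y hy
    have h : iteratedDeriv (2 + 1) (deriv u) = iteratedDeriv 4 u := by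
      rw [← comp 1 3, iteratedDeriv_one]
    rw [h]; exact hM y hy
  have hc2 : ContDiff ℝ ((1 + 1 : ℕ) : ℕ) (iteratedDeriv 2 u) := hder 2 2 rfl
  have hb2 : ∀ y ∈ Icc t (t + τ), ‖iteratedDeriv (1 + 1) (iteratedDeriv 2 u) y‖ ≤ M := by
    intro y hy
    have h : iteratedDeriv (1 + 1) (iteratedDeriv 2 u) = iteratedDeriv 4 u := comp 2 2
    rw [h]; exact hM y hy
  have h1 := taylor_bound' (f := deriv u) (n := 2) hc1 hτ hb1
  have h2 := taylor_bound' (f := iteratedDeriv 2 u) (n := 1) hc2 hτ hb2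
  · -- main estimate
    set A0 := u (t + τ) - ∑ k ∈ Finset.range 4, ((k ! : ℝ)⁻¹ * τ ^ k) • iteratedDeriv k u t
      with hA0
    set A1 := deriv u (t + τ)
        - ∑ k ∈ Finset.range 3, ((k ! : ℝ)⁻¹ * τ ^ k) • iteratedDeriv k (deriv u) t with hA1
    set A2 := iteratedDeriv 2 u (t + τ)
        - ∑ k ∈ Finset.range 2, ((k ! : ℝ)⁻¹ * τ ^ k) • iteratedDeriv k (iteratedDeriv 2 u) t
      with hA2
    have key : (τ⁻¹ • (u (t + τ) - u t)
          + (τ / 2) • (τ⁻¹ • (deriv u (t + τ) - deriv u t))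
          + (τ ^ 2 / 12) • (τ⁻¹ • (iteratedDeriv 2 u (t + τ) - iteratedDeriv 2 u t)))
        - deriv u (t + τ) = τ⁻¹ • A0 - (2 : ℝ)⁻¹ • A1 + (τ / 12) • A2 := by
      have r1 : ∀ k : ℕ, iteratedDeriv k (deriv u) = iteratedDeriv (k + 1) u := by
        intro k; rw [← comp 1 k, iteratedDeriv_one]
      rw [hA0, hA1, hA2]
      simp only [Finset.sum_range_succ, Finset.sum_range_zero, r1, comp, iteratedDeriv_zero,
        iteratedDeriv_one]
      norm_num [Nat.factorial]
      match_scalars <;> field_simp <;> ring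
    rw [key]
    have hn : ‖τ⁻¹ • A0 - (2 : ℝ)⁻¹ • A1 + (τ / 12) • A2‖
        ≤ ‖τ⁻¹ • A0‖ + ‖(2 : ℝ)⁻¹ • A1‖ + ‖(τ / 12) • A2‖ :=
      le_trans (norm_add_le _ _) (by gcongr; exact norm_sub_le _ _)
    refine le_trans hn ?_
    rw [norm_smul, norm_smul, norm_smul, Real.norm_eq_abs, Real.norm_eq_abs, Real.norm_eq_abs,
      abs_of_pos (by positivity : (0:ℝ) < τ⁻¹), abs_of_pos (by norm_num : (0:ℝ) < (2:ℝ)⁻¹),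
      abs_of_pos (by positivity : (0:ℝ) < τ / 12)]
    have f3 : ((3:ℕ)! : ℝ) = 6 := by norm_num [Nat.factorial]
    have f2 : ((2:ℕ)! : ℝ) = 2 := by norm_num [Nat.factorial]
    have f1 : ((1:ℕ)! : ℝ) = 1 := by norm_num [Nat.factorial]
    rw [f3] at h0; rw [f2] at h1; rw [f1] at h2
    have e0 : τ⁻¹ * ‖A0‖ ≤ M * τ ^ 3 / 6 := by
      rw [inv_mul_le_iff₀ hτ]
      refine le_trans h0 (le_of_eq ?_); ring
    have e1 : (2 : ℝ)⁻¹ * ‖A1‖ ≤ M * τ ^ 3 / 4 := by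
      nlinarith [h1, norm_nonneg A1]
    have e2 : τ / 12 * ‖A2‖ ≤ M * τ ^ 3 / 12 := by
      nlinarith [h2, norm_nonneg A2, hτ.le]
    nlinarith [e0, e1, e2, hM0, pow_pos hτ 3]
end
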